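/- arXiv:1910.05936 — 2 statements merged into one kernel-verified Lean document; each statement's English description precedes it below -/
import Mathlib

section
/- Let n and m be non-negative integers with m = ⌊n/3⌋ + δ_{1,(n mod 3)}. For any integers l_0, …, l_{m-1}, the set {ρ(∇(bs_n(0,l_0))), …, ρ(∇(bs_n(m-1,l_{m-1})))} is a basis of RST(n). Moreover, for each k ∈ {0,…,m-1}, the (i,j)-entry of ρ(∇(bs_n(k,l_k))) equals C(l_k + j - i, k + 1 - i) + C(l_k + n - j, k + i - j) + C(l_k + i - 1, k + j - n) mod 2, for all 1 ≤ i ≤ j ≤ n. -/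
open Finset

namespace Steinhaus

/-- Extended binomial coefficient `C(a,b)` for integers `a`, `b`:
`C(a,0) = 1`, `C(0,b) = 0` for `b > 0`, Pascal's rule everywhere; in particular
`C(a,b) = 0` for `b < 0` and `C(a,b) = (-1)^b C(b-a-1,b)` for `a < 0 ≤ b`. -/
def ibinom (a b : ℤ) : ℤ :=
  if b < 0 then 0
  else if 0 ≤ a then (a.toNat.choose b.toNat : ℤ)
  else (-1) ^ b.toNat * ((b - a - 1).toNat.choose b.toNat : ℤ)

/-- `(i,j)` is an index of the triangle of size `n`, i.e. `1 ≤ i ≤ j ≤ n`. -/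
def InTri (n i j : ℕ) : Prop := 1 ≤ i ∧ i ≤ j ∧ j ≤ n

instance (n i j : ℕ) : Decidable (InTri n i j) :=
  inferInstanceAs (Decidable (1 ≤ i ∧ i ≤ j ∧ j ≤ n))

/-- The `ZMod 2`-vector space of binary Steinhaus triangles of size `n`,
realized as functions `ℕ → ℕ → ZMod 2` vanishing outside the triangle
`{(i,j) | 1 ≤ i ≤ j ≤ n}` and satisfying the local rule
`a i j = a (i-1) (j-1) + a (i-1) j` inside it. -/
def ST (n : ℕ) : Submodule (ZMod 2) (ℕ → ℕ → ZMod 2) where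
  carrier := {a | (∀ i j, ¬ InTri n i j → a i j = 0) ∧
    ∀ i j, 2 ≤ i → i ≤ j → j ≤ n → a i j = a (i - 1) (j - 1) + a (i - 1) j}
  add_mem' := by
    rintro a b ⟨ha0, ha1⟩ ⟨hb0, hb1⟩
    refine ⟨fun i j h => ?_, fun i j h2 hij hjn => ?_⟩
    · simp only [Pi.add_apply, ha0 i j h, hb0 i j h, add_zero]
    · simp only [Pi.add_apply, ha1 i j h2 hij hjn, hb1 i j h2 hij hjn]
      ring
  zero_mem' := ⟨fun _ _ _ => rfl, fun _ _ _ _ _ => by simp⟩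
  smul_mem' := by
    rintro c a ⟨ha0, ha1⟩
    refine ⟨fun i j h => ?_, fun i j h2 hij hjn => ?_⟩
    · simp only [Pi.smul_apply, ha0 i j h, smul_zero]
    · simp only [Pi.smul_apply, ha1 i j h2 hij hjn, smul_add]

/-- The first row of the triangle `a` (of size `n`) is the sequence `S`;
equivalently, `a = ∇S`. -/
def FirstRow (n : ℕ) (a : ℕ → ℕ → ZMod 2) (S : ℕ → ZMod 2) : Prop :=
  ∀ j, 1 ≤ j → j ≤ n → a 1 j = S j

/-- The rotation `r` by 120 degrees: `r(a)_{i,j} = a_{j-i+1, n-i+1}`. -/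
def rot (n : ℕ) (a : ℕ → ℕ → ZMod 2) : ℕ → ℕ → ZMod 2 :=
  fun i j => if InTri n i j then a (j - i + 1) (n - i + 1) else 0

/-- The horizontal reflection `h`: `h(a)_{i,j} = a_{i, n-j+i}`. -/
def hrefl (n : ℕ) (a : ℕ → ℕ → ZMod 2) : ℕ → ℕ → ZMod 2 :=
  fun i j => if InTri n i j then a i (n - j + i) else 0

lemma rot_add (n : ℕ) (a b : ℕ → ℕ → ZMod 2) :
    rot n (a + b) = rot n a + rot n b := by
  funext i j
  simp only [rot, Pi.add_apply]
  split_ifs <;> simp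

lemma rot_smul (n : ℕ) (c : ZMod 2) (a : ℕ → ℕ → ZMod 2) :
    rot n (c • a) = c • rot n a := by
  funext i j
  simp only [rot, Pi.smul_apply]
  split_ifs <;> simp

lemma hrefl_add (n : ℕ) (a b : ℕ → ℕ → ZMod 2) :
    hrefl n (a + b) = hrefl n a + hrefl n b := by
  funext i j
  simp only [hrefl, Pi.add_apply]
  split_ifs <;> simp

lemma hrefl_smul (n : ℕ) (c : ZMod 2) (a : ℕ → ℕ → ZMod 2) :
    hrefl n (c • a) = c • hrefl n a := by
  funext i j
  simp only [hrefl, Pi.smul_apply]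
  split_ifs <;> simp

/-- The linear map `ρ = r² + r + id`. -/
def rho (n : ℕ) (a : ℕ → ℕ → ZMod 2) : ℕ → ℕ → ZMod 2 :=
  rot n (rot n a) + rot n a + a

/-- The subspace of rotationally symmetric Steinhaus triangles (fixed by `r`). -/
def RST (n : ℕ) : Submodule (ZMod 2) (ℕ → ℕ → ZMod 2) where
  carrier := {a | a ∈ ST n ∧ rot n a = a}
  add_mem' := by
    rintro a b ⟨ha, ha'⟩ ⟨hb, hb'⟩
    exact ⟨add_mem ha hb, by rw [rot_add, ha', hb']⟩
  zero_mem' := ⟨zero_mem _, by funext i j; simp [rot]⟩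
  smul_mem' := by
    rintro c a ⟨ha, ha'⟩
    exact ⟨Submodule.smul_mem _ c ha, by rw [rot_smul, ha']⟩

/-- The subspace of horizontally symmetric Steinhaus triangles (fixed by `h`). -/
def HST (n : ℕ) : Submodule (ZMod 2) (ℕ → ℕ → ZMod 2) where
  carrier := {a | a ∈ ST n ∧ hrefl n a = a}
  add_mem' := by
    rintro a b ⟨ha, ha'⟩ ⟨hb, hb'⟩
    exact ⟨add_mem ha hb, by rw [hrefl_add, ha', hb']⟩
  zero_mem' := ⟨zero_mem _, by funext i j; simp [hrefl]⟩
  smul_mem' := by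
    rintro c a ⟨ha, ha'⟩
    exact ⟨Submodule.smul_mem _ c ha, by rw [hrefl_smul, ha']⟩

/-- The subspace of dihedrally symmetric Steinhaus triangles (fixed by `r` and `h`). -/
def DST (n : ℕ) : Submodule (ZMod 2) (ℕ → ℕ → ZMod 2) where
  carrier := {a | a ∈ ST n ∧ rot n a = a ∧ hrefl n a = a}
  add_mem' := by
    rintro a b ⟨ha, ha', ha''⟩ ⟨hb, hb', hb''⟩
    exact ⟨add_mem ha hb, by rw [rot_add, ha', hb'], by rw [hrefl_add, ha'', hb'']⟩
  zero_mem' := ⟨zero_mem _, by funext i j; simp [rot], by funext i j; simp [hrefl]⟩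
  smul_mem' := by
    rintro c a ⟨ha, ha', ha''⟩
    exact ⟨Submodule.smul_mem _ c ha, by rw [rot_smul, ha'],
      by rw [hrefl_smul, ha'']⟩

/-- `σ₂`: the sum of the first `n` terms of a sequence over `ZMod 2`. -/
def seqSum (n : ℕ) (S : ℕ → ZMod 2) : ZMod 2 := ∑ j ∈ Finset.Icc 1 n, S j

/-- The subspace `DST₀(n)` of dihedrally symmetric Steinhaus triangles whose
first row has zero sum. -/
def DST0 (n : ℕ) : Submodule (ZMod 2) (ℕ → ℕ → ZMod 2) where
  carrier := {a | a ∈ DST n ∧ seqSum n (a 1) = 0}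
  add_mem' := by
    rintro a b ⟨ha, ha'⟩ ⟨hb, hb'⟩
    refine ⟨add_mem ha hb, ?_⟩
    have h : seqSum n ((a + b) 1) = seqSum n (a 1) + seqSum n (b 1) := by
      simp [seqSum, Finset.sum_add_distrib]
    rw [h, ha', hb', add_zero]
  zero_mem' := ⟨zero_mem _, by simp [seqSum]⟩
  smul_mem' := by
    rintro c a ⟨ha, ha'⟩
    refine ⟨Submodule.smul_mem _ c ha, ?_⟩
    have h : seqSum n ((c • a) 1) = c • seqSum n (a 1) := by
      simp [seqSum, smul_eq_mul, Finset.mul_sum]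
    rw [h, ha', smul_zero]

/-- The derived sequence `∂S`. -/
def der (S : ℕ → ZMod 2) : ℕ → ZMod 2 := fun j => S j + S (j + 1)

/-- The antiderived sequence `∫_{i,x} S`, whose `j`-th term is
`x + Σ_{k=1}^{i-1} S k + Σ_{k=1}^{j-1} S k`. -/
def antider (i : ℕ) (x : ZMod 2) (S : ℕ → ZMod 2) : ℕ → ZMod 2 :=
  fun j => x + (∑ k ∈ Finset.Ico 1 i, S k) + (∑ k ∈ Finset.Ico 1 j, S k)

/-- A sequence of length `n` is symmetric. -/
def SymmSeq (n : ℕ) (S : ℕ → ZMod 2) : Prop :=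
  ∀ j, 1 ≤ j → j ≤ n → S (n - j + 1) = S j

/-- The binomial sequence `bs(k,l)` whose `j`-th term is `C(l+j-1, k) mod 2`. -/
def bseq (k l : ℤ) : ℕ → ZMod 2 := fun j => ((ibinom (l + (j : ℤ) - 1) k : ℤ) : ZMod 2)

/-- The map `H : ST(n) → ST(n-3)` removing the first row and the two sides. -/
def Hmap (n : ℕ) (a : ℕ → ℕ → ZMod 2) : ℕ → ℕ → ZMod 2 :=
  fun i j => if InTri (n - 3) i j then a (1 + i) (2 + j) else 0

/-- The projection `π_G` of a subspace `V` of triangles onto coordinates in `G`. -/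
def proj (V : Submodule (ZMod 2) (ℕ → ℕ → ZMod 2)) (G : Set (ℕ × ℕ)) :
    V →ₗ[ZMod 2] (G → ZMod 2) where
  toFun a := fun p => (a : ℕ → ℕ → ZMod 2) p.1.1 p.1.2
  map_add' := fun _ _ => rfl
  map_smul' := fun _ _ => rfl

/-- `G` is a generating index set of the subspace `V` of `ST(n)`:
`G` consists of triangle indices and `π_G : V → (ZMod 2)^G` is an isomorphism. -/
def IsGenIndexSet (n : ℕ) (V : Submodule (ZMod 2) (ℕ → ℕ → ZMod 2))
    (G : Set (ℕ × ℕ)) : Prop :=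
  (∀ p ∈ G, InTri n p.1 p.2) ∧ Function.Bijective (proj V G)

end Steinhaus

/-!
By Pascal's rule `∇ bs_n(k, l)` has `(i, j)`-entry `C(l + j - i, k + 1 - i)`, and the rotation
permutes the three terms of the claimed formula for `ρ(∇ bs_n(k, l))`, which is therefore explicit.

The map `H`, deleting the first row and the two sides, sends `RST(n+3)` to `RST(n)` and the
`k`-th triangle of the family for `n + 3` to the `(k-1)`-th one for `n` (with `l` shifted by one),
while it kills the `0`-th one. A rotationally symmetric triangle killed by `H` is determined by
its `(1,2)`-entry, where the `0`-th triangle takes the value `1`. Independence and spanning thus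
both follow by induction on `n` in steps of `3`, from the cases `n ≤ 2`.
-/

namespace Steinhaus

section FinSucc

variable {K M N : Type*} [Field K] [AddCommGroup M] [Module K M] [AddCommGroup N] [Module K N]
  {m : ℕ} {v : Fin (m + 1) → M} (f : M →ₗ[K] N)

lemma linearIndependent_fin_succ_of_map (hv0 : v 0 ≠ 0) (hf0 : f (v 0) = 0)
    (htail : LinearIndependent K (f ∘ Fin.tail v)) : LinearIndependent K v := by
  rw [Fintype.linearIndependent_iff] at htail ⊢
  intro g hg
  have hsucc : ∀ k : Fin m, g k.succ = 0 := by
    refine htail (fun k => g k.succ) ?_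
    simpa [Fin.sum_univ_succ, hf0, Fin.tail] using congrArg f hg
  have h0 : g 0 = 0 := by
    simpa [Fin.sum_univ_succ, hsucc, hv0] using hg
  exact fun k => Fin.cases h0 hsucc k

lemma le_span_fin_succ_of_map {S : Submodule K M} (hvS : ∀ k, v k ∈ S)
    (hmap : ∀ x ∈ S, f x ∈ Submodule.span K (Set.range (f ∘ Fin.tail v)))
    (hker : ∀ x ∈ S, f x = 0 → x ∈ K ∙ v 0) : S ≤ Submodule.span K (Set.range v) := by
  intro x hx
  have htail : Submodule.span K (Set.range (Fin.tail v)) ≤ Submodule.span K (Set.range v) :=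
    Submodule.span_mono (Set.range_comp_subset_range Fin.succ v)
  obtain ⟨y, hy, hyx⟩ : f x ∈ (Submodule.span K (Set.range (Fin.tail v))).map f := by
    rw [Submodule.map_span, ← Set.range_comp]
    exact hmap x hx
  have hyS : y ∈ S := by
    refine Submodule.span_le.2 ?_ hy
    rintro _ ⟨k, rfl⟩
    exact hvS k.succ
  have hxy : x - y ∈ K ∙ v 0 := hker _ (sub_mem hx hyS) (by rw [map_sub, hyx, sub_self])
  have h0 : K ∙ v 0 ≤ Submodule.span K (Set.range v) :=
    Submodule.span_mono (Set.singleton_subset_iff.2 ⟨0, rfl⟩)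
  have := add_mem (htail hy) (h0 hxy)
  rwa [add_sub_cancel] at this

end FinSucc

lemma ibinom_of_neg {a b : ℤ} (hb : b < 0) : ibinom a b = 0 := if_pos hb

lemma ibinom_eq_ringChoose (a : ℤ) {b : ℤ} (hb : 0 ≤ b) :
    ibinom a b = Ring.choose a b.toNat := by
  rw [ibinom, if_neg (not_lt.2 hb)]
  split_ifs with ha
  · rw [← Ring.choose_natCast, Int.toNat_of_nonneg ha]
  · obtain ⟨r, rfl⟩ : ∃ r, a = -r := ⟨-a, (neg_neg a).symm⟩
    rw [Ring.choose_neg, show r + b.toNat - 1 = ((b - -r - 1).toNat : ℤ) by omega,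
      Ring.choose_natCast, Units.smul_def, Int.coe_negOnePow_natCast, smul_eq_mul]

lemma ibinom_zero_right (a : ℤ) : ibinom a 0 = 1 := by
  simp [ibinom_eq_ringChoose a le_rfl]

lemma ibinom_pascal (a b : ℤ) : ibinom a b = ibinom (a - 1) (b - 1) + ibinom (a - 1) b := by
  rcases lt_trichotomy b 0 with hb | rfl | hb
  · simp [ibinom_of_neg hb, ibinom_of_neg (show b - 1 < 0 by omega)]
  · rw [ibinom_zero_right, ibinom_zero_right, zero_sub, ibinom_of_neg (by norm_num), zero_add]
  · obtain ⟨k, rfl⟩ : ∃ k : ℕ, b = k + 1 := ⟨(b - 1).toNat, by omega⟩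
    rw [ibinom_eq_ringChoose _ (by omega), ibinom_eq_ringChoose _ (by omega),
      ibinom_eq_ringChoose _ (by omega)]
    simpa using Ring.choose_succ_succ (a - 1) k

lemma eq_of_mem_ST_of_firstRow {n : ℕ} {a b : ℕ → ℕ → ZMod 2} (ha : a ∈ ST n) (hb : b ∈ ST n)
    (h : ∀ j, 1 ≤ j → j ≤ n → a 1 j = b 1 j) : a = b := by
  funext i
  induction i with
  | zero => funext j; rw [ha.1 0 j (by simp [InTri]), hb.1 0 j (by simp [InTri])]
  | succ i ih =>
    funext j
    by_cases hij : InTri n (i + 1) j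
    · obtain ⟨-, hij, hjn⟩ := hij
      rcases Nat.eq_zero_or_pos i with rfl | hi
      · exact h j (by omega) hjn
      · rw [ha.2 _ _ (by omega) hij hjn, hb.2 _ _ (by omega) hij hjn, Nat.add_sub_cancel, ih]
    · rw [ha.1 _ _ hij, hb.1 _ _ hij]

lemma rot_apply {n i j : ℕ} (h : InTri n i j) (a : ℕ → ℕ → ZMod 2) :
    rot n a i j = a (j - i + 1) (n - i + 1) := if_pos h

lemma rot_mem_ST {n : ℕ} {a : ℕ → ℕ → ZMod 2} (ha : a ∈ ST n) : rot n a ∈ ST n := by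
  refine ⟨fun i j h => if_neg h, fun i j hi hij hjn => ?_⟩
  rw [rot_apply ⟨by omega, hij, hjn⟩, rot_apply ⟨by omega, by omega, by omega⟩,
    rot_apply ⟨by omega, by omega, by omega⟩]
  -- rotation maps the elementary triangle with apex `(i, j)` onto the one with apex
  -- `(j - i + 2, n - i + 2)`
  have key := ha.2 (j - i + 2) (n - i + 2) (by omega) (by omega) (by omega)
  rw [show j - 1 - (i - 1) + 1 = j - i + 1 by omega, show n - (i - 1) + 1 = n - i + 2 by omega,
    show j - (i - 1) + 1 = j - i + 2 by omega, key, show j - i + 2 - 1 = j - i + 1 by omega,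
    show n - i + 2 - 1 = n - i + 1 by omega]
  grind

lemma rot_rot_rot {n : ℕ} {a : ℕ → ℕ → ZMod 2} (ha : a ∈ ST n) : rot n (rot n (rot n a)) = a := by
  funext i j
  by_cases h : InTri n i j
  · obtain ⟨h1, h2, h3⟩ := h
    rw [rot_apply ⟨h1, h2, h3⟩, rot_apply ⟨by omega, by omega, by omega⟩,
      rot_apply ⟨by omega, by omega, by omega⟩]
    congr 1 <;> omega
  · exact (if_neg h).trans (ha.1 i j h).symm

lemma rho_mem_RST {n : ℕ} {a : ℕ → ℕ → ZMod 2} (ha : a ∈ ST n) : rho n a ∈ RST n := by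
  refine ⟨add_mem (add_mem (rot_mem_ST (rot_mem_ST ha)) (rot_mem_ST ha)) ha, ?_⟩
  rw [rho, rot_add, rot_add, rot_rot_rot ha]
  abel

/-- `∇ bs_n(k, l)`: by Pascal's rule its `(i, j)`-entry is `C(l + j - i, k + 1 - i)`. -/
def binomTri (n : ℕ) (l k : ℤ) : ℕ → ℕ → ZMod 2 := fun i j =>
  if InTri n i j then ((ibinom (l + j - i) (k + 1 - i) : ℤ) : ZMod 2) else 0

lemma binomTri_apply {n i j : ℕ} (h : InTri n i j) (l k : ℤ) :
    binomTri n l k i j = ((ibinom (l + j - i) (k + 1 - i) : ℤ) : ZMod 2) := if_pos h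

lemma binomTri_mem_ST (n : ℕ) (l k : ℤ) : binomTri n l k ∈ ST n := by
  refine ⟨fun i j h => if_neg h, fun i j hi hij hjn => ?_⟩
  rw [binomTri_apply ⟨by omega, hij, hjn⟩, binomTri_apply ⟨by omega, by omega, by omega⟩,
    binomTri_apply ⟨by omega, by omega, by omega⟩]
  have h := ibinom_pascal (l + j - i + 1) (k + 1 - i + 1)
  simp only [add_sub_cancel_right] at h
  rw [show l + ((j - 1 : ℕ) : ℤ) - ((i - 1 : ℕ) : ℤ) = l + j - i by omega,
    show l + (j : ℤ) - ((i - 1 : ℕ) : ℤ) = l + j - i + 1 by omega,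
    show k + 1 - ((i - 1 : ℕ) : ℤ) = k + 1 - i + 1 by omega, h]
  push_cast
  grind

lemma eq_binomTri_of_firstRow {n : ℕ} {a : ℕ → ℕ → ZMod 2} {l k : ℤ} (ha : a ∈ ST n)
    (h : FirstRow n a (bseq k l)) : a = binomTri n l k := by
  refine eq_of_mem_ST_of_firstRow ha (binomTri_mem_ST n l k) fun j hj hjn => ?_
  rw [h j hj hjn, binomTri_apply ⟨le_rfl, hj, hjn⟩, bseq]
  norm_num

lemma rho_binomTri_apply {n i j : ℕ} (h : InTri n i j) (l k : ℤ) :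
    rho n (binomTri n l k) i j =
      ((ibinom (l + j - i) (k + 1 - i) + ibinom (l + n - j) (k + i - j) +
        ibinom (l + i - 1) (k + j - n) : ℤ) : ZMod 2) := by
  obtain ⟨h1, h2, h3⟩ := h
  have hrot : rot n (binomTri n l k) i j = ((ibinom (l + n - j) (k + i - j) : ℤ) : ZMod 2) := by
    rw [rot_apply ⟨h1, h2, h3⟩, binomTri_apply ⟨by omega, by omega, by omega⟩]
    congr 2 <;> omega
  have hrot2 : rot n (rot n (binomTri n l k)) i j =
      ((ibinom (l + i - 1) (k + j - n) : ℤ) : ZMod 2) := by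
    rw [rot_apply ⟨h1, h2, h3⟩, rot_apply ⟨by omega, by omega, by omega⟩,
      binomTri_apply ⟨by omega, by omega, by omega⟩]
    congr 2 <;> omega
  simp only [rho, Pi.add_apply, hrot, hrot2, binomTri_apply ⟨h1, h2, h3⟩]
  push_cast
  ring

lemma apply_eq_of_mem_RST {n i j : ℕ} {a : ℕ → ℕ → ZMod 2} (ha : a ∈ RST n) (h : InTri n i j) :
    a i j = a (j - i + 1) (n - i + 1) :=
  (congrFun (congrFun ha.2 i) j).symm.trans (rot_apply h a)

lemma Hmap_apply {n i j : ℕ} (h : InTri n i j) (a : ℕ → ℕ → ZMod 2) :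
    Hmap (n + 3) a i j = a (1 + i) (2 + j) :=
  if_pos (by rwa [Nat.add_sub_cancel])

lemma Hmap_apply_of_not {n i j : ℕ} (h : ¬ InTri n i j) (a : ℕ → ℕ → ZMod 2) :
    Hmap (n + 3) a i j = 0 :=
  if_neg (by rwa [Nat.add_sub_cancel])

def HmapLinear (n : ℕ) : (ℕ → ℕ → ZMod 2) →ₗ[ZMod 2] (ℕ → ℕ → ZMod 2) where
  toFun := Hmap n
  map_add' a b := by
    funext i j
    simp only [Hmap, Pi.add_apply]
    split_ifs <;> simp
  map_smul' c a := by
    funext i j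
    simp only [Hmap, Pi.smul_apply, RingHom.id_apply]
    split_ifs <;> simp

lemma Hmap_mem_RST {n : ℕ} {a : ℕ → ℕ → ZMod 2} (ha : a ∈ RST (n + 3)) :
    Hmap (n + 3) a ∈ RST n := by
  refine ⟨⟨fun i j h => Hmap_apply_of_not h a, fun i j hi hij hjn => ?_⟩, ?_⟩
  · rw [Hmap_apply ⟨by omega, hij, hjn⟩, Hmap_apply ⟨by omega, by omega, by omega⟩,
      Hmap_apply ⟨by omega, by omega, by omega⟩, ha.1.2 _ _ (by omega) (by omega) (by omega)]
    congr 2 <;> omega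
  · funext i j
    by_cases h : InTri n i j
    · obtain ⟨h1, h2, h3⟩ := h
      rw [rot_apply ⟨h1, h2, h3⟩, Hmap_apply ⟨by omega, by omega, by omega⟩,
        Hmap_apply ⟨h1, h2, h3⟩, apply_eq_of_mem_RST (i := 1 + i) (j := 2 + j) ha
          ⟨by omega, by omega, by omega⟩]
      congr 1 <;> omega
    · rw [rot, if_neg h, Hmap_apply_of_not h]

lemma Hmap_rho_binomTri (n : ℕ) (l k : ℤ) :
    Hmap (n + 3) (rho (n + 3) (binomTri (n + 3) l k)) = rho n (binomTri n (l + 1) (k - 1)) := by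
  funext i j
  by_cases h : InTri n i j
  · obtain ⟨h1, h2, h3⟩ := h
    rw [Hmap_apply ⟨h1, h2, h3⟩, rho_binomTri_apply ⟨by omega, by omega, by omega⟩,
      rho_binomTri_apply ⟨h1, h2, h3⟩]
    push_cast
    ring_nf
  · rw [Hmap_apply_of_not h, (rho_mem_RST (binomTri_mem_ST n _ _)).1.1 i j h]

lemma rho_binomTri_neg_one (n : ℕ) (l : ℤ) : rho n (binomTri n l (-1)) = 0 := by
  funext i j
  by_cases h : InTri n i j
  · obtain ⟨h1, h2, h3⟩ := h
    rw [rho_binomTri_apply ⟨h1, h2, h3⟩, ibinom_of_neg (by omega), ibinom_of_neg (by omega),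
      ibinom_of_neg (by omega)]
    rfl
  · exact (rho_mem_RST (binomTri_mem_ST n _ _)).1.1 i j h

lemma eq_zero_of_Hmap_eq_zero {n : ℕ} {a : ℕ → ℕ → ZMod 2} (ha : a ∈ RST (n + 3))
    (hH : Hmap (n + 3) a = 0) (h12 : a 1 2 = 0) : a = 0 := by
  have hrow2 : ∀ j, 3 ≤ j → j ≤ n + 2 → a 2 j = 0 := fun j hj hjn => by
    have := congrFun (congrFun hH 1) (j - 2)
    rwa [Hmap_apply ⟨le_rfl, by omega, by omega⟩, show 2 + (j - 2) = j by omega] at this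
  have hrow1 : ∀ j, 2 ≤ j → j ≤ n + 2 → a 1 j = 0 := by
    intro j hj
    induction j, hj using Nat.le_induction with
    | base => exact fun _ => h12
    | succ j hj ih =>
      intro hjn
      have hrule := ha.1.2 2 (j + 1) le_rfl (by omega) (by omega)
      rw [hrow2 (j + 1) (by omega) hjn, Nat.add_sub_cancel, ih (by omega)] at hrule
      simpa using hrule.symm
  -- rotation links the corners to the middle of row 1: `a 2 2 = a 1 (n+2)`, `a 1 1 = a 1 (n+3)`
  have h11 : a 1 1 = 0 := by
    have hrule := ha.1.2 2 2 le_rfl le_rfl (by omega)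
    rw [apply_eq_of_mem_RST ha ⟨by omega, le_rfl, by omega⟩, h12, add_zero] at hrule
    rw [← hrule]
    exact hrow1 _ (by omega) (by omega)
  have h1n : a 1 (n + 3) = 0 := by
    rw [← h11, apply_eq_of_mem_RST ha ⟨le_rfl, le_rfl, by omega⟩]
    rfl
  refine eq_of_mem_ST_of_firstRow ha.1 (zero_mem _) fun j hj hjn => ?_
  rcases (show j = 1 ∨ (2 ≤ j ∧ j ≤ n + 2) ∨ j = n + 3 by omega) with rfl | hj' | rfl
  exacts [h11, hrow1 j hj'.1 hj'.2, h1n]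

def rhoFamily (n : ℕ) {m : ℕ} (l : Fin m → ℤ) (k : Fin m) : ℕ → ℕ → ZMod 2 :=
  rho n (binomTri n (l k) (k : ℕ))

lemma rhoFamily_mem_RST (n : ℕ) {m : ℕ} (l : Fin m → ℤ) (k : Fin m) : rhoFamily n l k ∈ RST n :=
  rho_mem_RST (binomTri_mem_ST _ _ _)

lemma HmapLinear_comp_tail_rhoFamily (n : ℕ) {m : ℕ} (l : Fin (m + 1) → ℤ) :
    HmapLinear (n + 3) ∘ Fin.tail (rhoFamily (n + 3) l) = rhoFamily n fun k => l k.succ + 1 := by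
  funext k
  simp only [Function.comp_apply, Fin.tail, rhoFamily, HmapLinear, LinearMap.coe_mk,
    AddHom.coe_mk, Hmap_rho_binomTri, Fin.val_succ]
  push_cast
  ring_nf

lemma HmapLinear_rhoFamily_zero (n : ℕ) {m : ℕ} (l : Fin (m + 1) → ℤ) :
    HmapLinear (n + 3) (rhoFamily (n + 3) l 0) = 0 := by
  simpa [rhoFamily, HmapLinear, Hmap_rho_binomTri] using rho_binomTri_neg_one n (l 0 + 1)

lemma rhoFamily_zero_apply_one_two (n : ℕ) {m : ℕ} (l : Fin (m + 1) → ℤ) :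
    rhoFamily (n + 3) l 0 1 2 = 1 := by
  rw [rhoFamily, rho_binomTri_apply ⟨le_rfl, by omega, by omega⟩, Fin.val_zero]
  push_cast
  rw [ibinom_zero_right, ibinom_of_neg (by norm_num), ibinom_of_neg (by omega)]
  simp

lemma mem_span_rhoFamily_zero_of_Hmap_eq_zero {n : ℕ} {m : ℕ} (l : Fin (m + 1) → ℤ)
    {a : ℕ → ℕ → ZMod 2} (ha : a ∈ RST (n + 3)) (hH : Hmap (n + 3) a = 0) :
    a ∈ ZMod 2 ∙ rhoFamily (n + 3) l 0 := by
  refine Submodule.mem_span_singleton.2 ⟨a 1 2, (sub_eq_zero.1 ?_).symm⟩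
  refine eq_zero_of_Hmap_eq_zero (sub_mem ha (Submodule.smul_mem _ _ (rhoFamily_mem_RST _ _ _)))
    ?_ ?_
  · have := map_sub (HmapLinear (n + 3)) a (a 1 2 • rhoFamily (n + 3) l 0)
    rw [map_smul, HmapLinear_rhoFamily_zero, smul_zero, sub_zero] at this
    exact this.trans hH
  · simp [rhoFamily_zero_apply_one_two]

lemma eq_zero_of_mem_ST_zero {a : ℕ → ℕ → ZMod 2} (ha : a ∈ ST 0) : a = 0 :=
  eq_of_mem_ST_of_firstRow ha (zero_mem _) fun _ hj hj0 => absurd hj (by omega)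

lemma eq_zero_of_mem_RST_two {a : ℕ → ℕ → ZMod 2} (ha : a ∈ RST 2) : a = 0 := by
  have h11 : a 1 1 = a 1 2 := apply_eq_of_mem_RST ha ⟨le_rfl, le_rfl, by omega⟩
  have h22 : a 2 2 = a 1 1 := apply_eq_of_mem_RST ha ⟨by omega, le_rfl, le_rfl⟩
  have hrule : a 2 2 = a 1 1 + a 1 2 := ha.1.2 2 2 le_rfl le_rfl le_rfl
  have h0 : a 1 1 = 0 := by grind
  refine eq_of_mem_ST_of_firstRow ha.1 (zero_mem _) fun j hj hj2 => ?_
  interval_cases j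
  exacts [h0, h11 ▸ h0]

lemma rhoFamily_one_apply_one_one (l : Fin 1 → ℤ) : rhoFamily 1 l 0 1 1 = 1 := by
  rw [rhoFamily, rho_binomTri_apply ⟨le_rfl, le_rfl, le_rfl⟩, Fin.val_zero]
  push_cast
  rw [ibinom_zero_right]
  decide

lemma eq_smul_rhoFamily_of_mem_ST_one (l : Fin 1 → ℤ) {a : ℕ → ℕ → ZMod 2} (ha : a ∈ ST 1) :
    a = a 1 1 • rhoFamily 1 l 0 := by
  refine eq_of_mem_ST_of_firstRow ha (Submodule.smul_mem _ _ (rhoFamily_mem_RST _ _ _).1)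
    fun j hj hj1 => ?_
  obtain rfl : j = 1 := by omega
  rw [Pi.smul_apply, Pi.smul_apply, rhoFamily_one_apply_one_one, smul_eq_mul, mul_one]

lemma linearIndependent_rhoFamily_and_RST_le_span (n m : ℕ)
    (hm : m = n / 3 + if n % 3 = 1 then 1 else 0) (l : Fin m → ℤ) :
    LinearIndependent (ZMod 2) (rhoFamily n l) ∧
      RST n ≤ Submodule.span (ZMod 2) (Set.range (rhoFamily n l)) := by
  induction n using Nat.strong_induction_on generalizing m with
  | _ n ih =>
  match n, ih, hm with
  | 0, _, hm =>
    obtain rfl : m = 0 := by simpa using hm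
    exact ⟨linearIndependent_empty_type, fun a ha => by
      rw [eq_zero_of_mem_ST_zero ha.1]; exact zero_mem _⟩
  | 2, _, hm =>
    obtain rfl : m = 0 := by simpa using hm
    exact ⟨linearIndependent_empty_type, fun a ha => by
      rw [eq_zero_of_mem_RST_two ha]; exact zero_mem _⟩
  | 1, _, hm =>
    obtain rfl : m = 1 := by simpa using hm
    refine ⟨linearIndependent_unique_iff.2 fun h => ?_, fun a ha => ?_⟩
    · simpa [rhoFamily_one_apply_one_one] using congrFun (congrFun h 1) 1
    · rw [eq_smul_rhoFamily_of_mem_ST_one l ha.1]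
      exact Submodule.smul_mem _ _ (Submodule.subset_span ⟨0, rfl⟩)
  | n + 3, ih, hm =>
    obtain ⟨m, rfl, hm'⟩ : ∃ m', m = m' + 1 ∧ m' = n / 3 + (if n % 3 = 1 then 1 else 0) :=
      ⟨_, by split_ifs at hm ⊢ <;> omega, rfl⟩
    obtain ⟨hli, hsp⟩ := ih n (by omega) m hm' fun k => l k.succ + 1
    rw [← HmapLinear_comp_tail_rhoFamily] at hli hsp
    refine ⟨linearIndependent_fin_succ_of_map (HmapLinear (n + 3)) (fun h => ?_)
      (HmapLinear_rhoFamily_zero n l) hli, le_span_fin_succ_of_map (HmapLinear (n + 3))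
      (rhoFamily_mem_RST _ l) (fun a ha => hsp (Hmap_mem_RST ha))
      fun a ha hH => mem_span_rhoFamily_zero_of_Hmap_eq_zero l ha hH⟩
    simpa [rhoFamily_zero_apply_one_two] using congrFun (congrFun h 1) 2

/-- Theorem 4. With `m = ⌊n/3⌋ + δ_{1,(n mod 3)}` and arbitrary
integers `l_0,…,l_{m-1}`, the family `(ρ(∇(bs_n(k, l_k))))_{0≤k≤m-1}` is a basis
of `RST(n)`; moreover its `(i,j)`-entry is
`C(l_k+j-i, k+1-i) + C(l_k+n-j, k+i-j) + C(l_k+i-1, k+j-n) mod 2`.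
Each `T k` denotes the triangle `∇(bs_n(k, l_k))`, i.e. the member of `ST(n)`
with first row `bs_n(k, l_k)`. -/
theorem statement7 (n m : ℕ) (hm : m = n / 3 + if n % 3 = 1 then 1 else 0)
    (l : Fin m → ℤ) (T : Fin m → ℕ → ℕ → ZMod 2)
    (hT : ∀ k, T k ∈ ST n ∧ FirstRow n (T k) (bseq ((k : ℕ) : ℤ) (l k))) :
    (∃ b : Module.Basis (Fin m) (ZMod 2) (RST n),
      ∀ k, (b k : ℕ → ℕ → ZMod 2) = rho n (T k)) ∧
    ∀ k : Fin m, ∀ i j, 1 ≤ i → i ≤ j → j ≤ n →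
      rho n (T k) i j =
        ((ibinom (l k + (j : ℤ) - (i : ℤ)) (((k : ℕ) : ℤ) + 1 - (i : ℤ)) +
          ibinom (l k + (n : ℤ) - (j : ℤ)) (((k : ℕ) : ℤ) + (i : ℤ) - (j : ℤ)) +
          ibinom (l k + (i : ℤ) - 1) (((k : ℕ) : ℤ) + (j : ℤ) - (n : ℤ)) : ℤ) : ZMod 2) := by
  have hT' : ∀ k, rho n (T k) = rhoFamily n l k := fun k => by
    rw [rhoFamily, ← eq_binomTri_of_firstRow (hT k).1 (hT k).2]
  obtain ⟨hli, hsp⟩ := linearIndependent_rhoFamily_and_RST_le_span n m hm l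
  have hspan : Submodule.span (ZMod 2) (Set.range (rhoFamily n l)) = RST n :=
    le_antisymm (Submodule.span_le.2 (Set.range_subset_iff.2 (rhoFamily_mem_RST n l))) hsp
  refine ⟨⟨(Module.Basis.span hli).map (LinearEquiv.ofEq _ _ hspan), fun k => ?_⟩,
    fun k i j hi hij hjn => ?_⟩
  · rw [Module.Basis.map_apply, LinearEquiv.coe_ofEq_apply, Module.Basis.span_apply, hT']
  · rw [hT', rhoFamily, rho_binomTri_apply ⟨hi, hij, hjn⟩]

end Steinhaus
end

section
/- For every non-negative integer n, the dimension over Z/2Z of the vector space HST(n) of horizontally symmetric binary Steinhaus triangles of size n equals ⌈n/2⌉. -/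
open Finset

/-!
A Steinhaus triangle is determined by its first row, since the local rule propagates the row
downwards, and every row generates one. On the first row the reflection `h` is the reversal
`j ↦ n + 1 - j`, so `HST(n)` is isomorphic to the space of symmetric sequences of length `n`,
which are freely determined by their first `⌈n/2⌉` terms.
-/

namespace Steinhaus

def nabla (n : ℕ) (S : ℕ → ZMod 2) : ℕ → ℕ → ZMod 2
  | 0 => fun _ => 0
  | 1 => fun j => if InTri n 1 j then S j else 0
  | i + 2 => fun j =>
      if InTri n (i + 2) j then nabla n S (i + 1) (j - 1) + nabla n S (i + 1) j else 0

section Triangles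

variable {n : ℕ} {S : ℕ → ZMod 2} {a b : ℕ → ℕ → ZMod 2}

lemma nabla_eq_zero {i j : ℕ} (h : ¬ InTri n i j) : nabla n S i j = 0 := by
  match i with
  | 0 => rfl
  | 1 => simp [nabla, h]
  | i + 2 => simp [nabla, h]

lemma nabla_mem_ST : nabla n S ∈ ST n := by
  refine ⟨fun i j h => nabla_eq_zero h, fun i j h2 hij hjn => ?_⟩
  obtain ⟨i, rfl⟩ : ∃ k, i = k + 2 := ⟨i - 2, by omega⟩
  simp [nabla, show InTri n (i + 2) j from ⟨by omega, hij, hjn⟩]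

lemma nabla_firstRow : FirstRow n (nabla n S) S := fun j h1 hjn => by
  simp [nabla, show InTri n 1 j from ⟨le_rfl, h1, hjn⟩]

lemma ST_ext (ha : a ∈ ST n) (hb : b ∈ ST n) (h : FirstRow n a (b 1)) : a = b := by
  obtain ⟨ha0, ha1⟩ := ha
  obtain ⟨hb0, hb1⟩ := hb
  funext i
  induction i with
  | zero => funext j; rw [ha0 0 j (by simp [InTri]), hb0 0 j (by simp [InTri])]
  | succ i ih =>
    funext j
    by_cases hin : InTri n (i + 1) j
    · obtain ⟨-, hij, hjn⟩ := hin
      rcases Nat.eq_zero_or_pos i with rfl | hi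
      · exact h j hij hjn
      · rw [ha1 (i + 1) j (by omega) hij hjn, hb1 (i + 1) j (by omega) hij hjn,
          Nat.add_sub_cancel, ih]
    · rw [ha0 _ _ hin, hb0 _ _ hin]

lemma hrefl_mem_ST (ha : a ∈ ST n) : hrefl n a ∈ ST n := by
  obtain ⟨ha0, ha1⟩ := ha
  refine ⟨fun i j h => by simp [hrefl, h], fun i j h2 hij hjn => ?_⟩
  have hin : InTri n i j := ⟨by omega, hij, hjn⟩
  have hin₁ : InTri n (i - 1) (j - 1) := ⟨by omega, by omega, by omega⟩
  have hin₂ : InTri n (i - 1) j := ⟨by omega, by omega, hjn⟩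
  simp only [hrefl, if_pos hin, if_pos hin₁, if_pos hin₂]
  rw [show n - (j - 1) + (i - 1) = n - j + i by omega,
    show n - j + (i - 1) = n - j + i - 1 by omega,
    ha1 i (n - j + i) h2 (by omega) (by omega), add_comm]

lemma hrefl_firstRow : FirstRow n (hrefl n a) (fun j => a 1 (n - j + 1)) := fun j h1 hjn => by
  simp [hrefl, show InTri n 1 j from ⟨le_rfl, h1, hjn⟩]

lemma symmSeq_row_one_of_mem_HST (ha : a ∈ HST n) : SymmSeq n (a 1) := fun j h1 hjn => by
  conv_rhs => rw [← ha.2]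
  exact (hrefl_firstRow j h1 hjn).symm

lemma nabla_mem_HST (hS : SymmSeq n S) : nabla n S ∈ HST n := by
  refine ⟨nabla_mem_ST, ST_ext (hrefl_mem_ST nabla_mem_ST) nabla_mem_ST fun j h1 hjn => ?_⟩
  rw [hrefl_firstRow j h1 hjn, nabla_firstRow j h1 hjn]
  exact (nabla_firstRow _ (by omega) (by omega)).trans (hS j h1 hjn)

end Triangles

section SymmetricSequences

variable {n : ℕ}

lemma SymmSeq.eq_of_eq_on_half {S T : ℕ → ZMod 2} (hS : SymmSeq n S) (hT : SymmSeq n T)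
    (h : ∀ j, 1 ≤ j → j ≤ (n + 1) / 2 → S j = T j) {j : ℕ} (h1 : 1 ≤ j) (hjn : j ≤ n) :
    S j = T j := by
  by_cases hj : j ≤ (n + 1) / 2
  · exact h j h1 hj
  · rw [← hS j h1 hjn, ← hT j h1 hjn, h _ (by omega) (by omega)]

def symmExtend (n : ℕ) (g : ℕ → ZMod 2) : ℕ → ZMod 2 :=
  fun j => if j ≤ (n + 1) / 2 then g j else g (n - j + 1)

lemma symmExtend_of_le (g : ℕ → ZMod 2) {j : ℕ} (hj : j ≤ (n + 1) / 2) :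
    symmExtend n g j = g j :=
  if_pos hj

lemma symmSeq_symmExtend (g : ℕ → ZMod 2) : SymmSeq n (symmExtend n g) := by
  intro j h1 hjn
  unfold symmExtend
  by_cases hj : j ≤ (n + 1) / 2 <;> by_cases hj' : n - j + 1 ≤ (n + 1) / 2 <;>
    simp only [hj, hj', if_true, if_false] <;> congr 1 <;> omega

end SymmetricSequences

def firstHalfRow (n : ℕ) : HST n →ₗ[ZMod 2] (Fin ((n + 1) / 2) → ZMod 2) where
  toFun a k := (a : ℕ → ℕ → ZMod 2) 1 (k + 1)
  map_add' _ _ := rfl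
  map_smul' _ _ := rfl

lemma firstHalfRow_injective (n : ℕ) : Function.Injective (firstHalfRow n) := by
  intro a b hab
  apply Subtype.ext
  refine ST_ext a.2.1 b.2.1 fun j h1 hjn => ?_
  refine (symmSeq_row_one_of_mem_HST a.2).eq_of_eq_on_half
    (symmSeq_row_one_of_mem_HST b.2) (fun j h1 hj => ?_) h1 hjn
  obtain ⟨k, rfl⟩ : ∃ k, j = k + 1 := ⟨j - 1, by omega⟩
  exact congrFun hab ⟨k, by omega⟩

lemma firstHalfRow_surjective (n : ℕ) : Function.Surjective (firstHalfRow n) := by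
  intro f
  let g : ℕ → ZMod 2 := fun j => if h : j - 1 < (n + 1) / 2 then f ⟨j - 1, h⟩ else 0
  refine ⟨⟨nabla n (symmExtend n g), nabla_mem_HST (symmSeq_symmExtend g)⟩, funext fun k => ?_⟩
  change nabla n (symmExtend n g) 1 (k + 1) = f k
  rw [nabla_firstRow _ (by omega) (by omega), symmExtend_of_le g (by omega)]
  simp [g]

/-- Corollary 13. `dim HST(n) = ⌈n/2⌉`. -/
theorem statement11 (n : ℕ) :
    Module.finrank (ZMod 2) (HST n) = (n + 1) / 2 := by
  rw [(LinearEquiv.ofBijective (firstHalfRow n)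
    ⟨firstHalfRow_injective n, firstHalfRow_surjective n⟩).finrank_eq, Module.finrank_fin_fun]

end Steinhaus
end
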